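/- arXiv:2305.19015 — 7 statements merged into one kernel-verified Lean document; each statement's English description precedes it below -/
import Mathlib

section
/- Increasing the battery capacity cannot increase energetic costs: if 0 < B ≤ B' then for all x, y ∈ ℝ ∪ {∞} one has x ⊕_{B'} y ≤ x ⊕_B y; consequently, for every path P, d_{B'}(P) ≤ d_B(P) (in particular, P traversable from a full battery of capacity B implies P traversable from a full battery of capacity B'), and for all vertices s, t, δ_{B'}(s, t) ≤ δ_B(s, t). -/
open scoped Classical

/-- The clamped addition `x ⊕_B y = [x + y]₀ᴮ` on `ℝ ∪ {∞}` (modeled inside `EReal`;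
inputs are never `⊥`). -/
noncomputable def eplus (B : ℝ) (x y : EReal) : EReal :=
  if x + y < 0 then 0 else if x + y ≤ (B : EReal) then x + y else ⊤

/-- `batt B b cst i` is the charge `b_i` of the battery after traversing the first `i`
arcs of a path whose `i`-th arc (0-indexed) has cost `cst i`, starting from charge `b`. -/
noncomputable def batt (B b : ℝ) (cst : ℕ → ℝ) : ℕ → ℝ
  | 0 => b
  | i + 1 => min (batt B b cst i - cst i) B

/-- The path with arc costs `cst 0, …, cst (k-1)` is traversable from initial charge `b`. -/
def Trav (B b : ℝ) (cst : ℕ → ℝ) (k : ℕ) : Prop :=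
  ∀ i, i < k → cst i ≤ batt B b cst i

/-- The energetic cost `d_{B,b}(P) = b - b_k` of a path with arc costs
`cst 0, …, cst (k-1)`, or `∞` if not traversable from initial charge `b`. -/
noncomputable def dE (B b : ℝ) (cst : ℕ → ℝ) (k : ℕ) : EReal :=
  if Trav B b cst k then ((b - batt B b cst k : ℝ) : EReal) else ⊤

/-- `u 0, u 1, …, u k` is a path in the graph with arc relation `Arc`. -/
def IsPath {V : Type*} (Arc : V → V → Prop) (u : ℕ → V) (k : ℕ) : Prop :=
  ∀ i, i < k → Arc (u i) (u (i + 1))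

/-- The energetic cost `δ_{B,b}(s,t)`: the minimum of `d_{B,b}(P)` over all `s`–`t`
paths `P` (`∞` if there is none). -/
noncomputable def deltaE {V : Type*} (Arc : V → V → Prop) (c : V → V → ℝ)
    (B b : ℝ) (s t : V) : EReal :=
  sInf { x : EReal | ∃ (u : ℕ → V) (k : ℕ), IsPath Arc u k ∧ u 0 = s ∧ u k = t ∧
    x = dE B b (fun i => c (u i) (u (i + 1))) k }

/-- The standard distance `δ(s,t)`: the infimum of total costs of `s`–`t` paths. -/
noncomputable def distE {V : Type*} (Arc : V → V → Prop) (c : V → V → ℝ)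
    (s t : V) : EReal :=
  sInf { x : EReal | ∃ (u : ℕ → V) (k : ℕ), IsPath Arc u k ∧ u 0 = s ∧ u k = t ∧
    x = ((∑ i ∈ Finset.range k, c (u i) (u (i + 1)) : ℝ) : EReal) }

/-- The graph has no negative cycles. -/
def NoNegCycles {V : Type*} (Arc : V → V → Prop) (c : V → V → ℝ) : Prop :=
  ∀ (u : ℕ → V) (k : ℕ), IsPath Arc u k → u k = u 0 → 1 ≤ k →
    0 ≤ ∑ i ∈ Finset.range k, c (u i) (u (i + 1))

/-! Raising the capacity from `B` to `B'` only removes clamping: by induction along the path,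
the charge with capacity `B'` stays at least `B' - B` above the charge with capacity `B`, so
every arc traversable before remains traversable and the cost `B - b_k` can only drop. -/

theorem eplus_le_eplus_of_le {B B' : ℝ} (hBB' : B ≤ B') (x y : EReal) :
    eplus B' x y ≤ eplus B x y := by
  unfold eplus
  split_ifs with _ hB' <;> try exact le_rfl
  · exact le_top
  · exact absurd (‹x + y ≤ B›.trans (EReal.coe_le_coe_iff.mpr hBB')) hB'

theorem batt_add_sub_le_batt {B B' b b' : ℝ} (hb : b + (B' - B) ≤ b')
    (cst : ℕ → ℝ) (i : ℕ) : batt B b cst i + (B' - B) ≤ batt B' b' cst i := by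
  induction i with
  | zero => exact hb
  | succ n ih =>
    simp only [batt]
    rw [← min_add_add_right]
    exact min_le_min (by linarith) (by linarith)

theorem Trav.of_capacity_le {B B' b b' : ℝ} (hBB' : B ≤ B') (hb : b + (B' - B) ≤ b')
    {cst : ℕ → ℝ} {k : ℕ} (h : Trav B b cst k) : Trav B' b' cst k := fun i hi => by
  linarith [h i hi, batt_add_sub_le_batt hb cst i]

theorem dE_full_le_of_le {B B' : ℝ} (hBB' : B ≤ B') (cst : ℕ → ℝ) (k : ℕ) :
    dE B' B' cst k ≤ dE B B cst k := by
  unfold dE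
  by_cases h : Trav B B cst k
  · rw [if_pos h, if_pos (h.of_capacity_le hBB' (by linarith))]
    have := batt_add_sub_le_batt (B := B) (B' := B') (b := B) (b' := B') (by linarith) cst k
    exact EReal.coe_le_coe_iff.mpr (by linarith)
  · rw [if_neg h]
    exact le_top

theorem deltaE_le_of_dE_le {V : Type*} (Arc : V → V → Prop) (c : V → V → ℝ)
    {B B' b b' : ℝ} (h : ∀ cst k, dE B' b' cst k ≤ dE B b cst k) (s t : V) :
    deltaE Arc c B' b' s t ≤ deltaE Arc c B b s t := by
  refine le_sInf ?_
  rintro _ ⟨u, k, hp, hs, ht, rfl⟩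
  exact (sInf_le ⟨u, k, hp, hs, ht, rfl⟩ : deltaE Arc c B' b' s t ≤ _).trans (h _ k)

theorem capacity_monotone_general {V : Type*} (Arc : V → V → Prop)
    (c : V → V → ℝ) (B B' : ℝ) (hBB' : B ≤ B') :
    (∀ x y : EReal, x ≠ ⊥ → y ≠ ⊥ → eplus B' x y ≤ eplus B x y) ∧
    (∀ (u : ℕ → V) (k : ℕ), IsPath Arc u k →
      dE B' B' (fun i => c (u i) (u (i + 1))) k ≤ dE B B (fun i => c (u i) (u (i + 1))) k) ∧
    (∀ (u : ℕ → V) (k : ℕ), IsPath Arc u k →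
      Trav B B (fun i => c (u i) (u (i + 1))) k →
      Trav B' B' (fun i => c (u i) (u (i + 1))) k) ∧
    (∀ s t : V, deltaE Arc c B' B' s t ≤ deltaE Arc c B B s t) :=
  ⟨fun x y _ _ => eplus_le_eplus_of_le hBB' x y,
    fun _ k _ => dE_full_le_of_le hBB' _ k,
    fun _ _ _ h => h.of_capacity_le hBB' (by linarith),
    deltaE_le_of_dE_le Arc c (dE_full_le_of_le hBB')⟩

/-- increasing the battery capacity cannot increase energetic costs:
if `0 < B ≤ B'` then `x ⊕_{B'} y ≤ x ⊕_B y` for all `x, y ∈ ℝ ∪ {∞}`; consequently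
`d_{B'}(P) ≤ d_B(P)` for every path `P` (in particular traversability from a full
battery of capacity `B` implies traversability from a full battery of capacity `B'`),
and `δ_{B'}(s,t) ≤ δ_B(s,t)` for all vertices `s, t`. -/
theorem capacity_monotone {V : Type*} [Fintype V] (Arc : V → V → Prop)
    (c : V → V → ℝ) (B B' : ℝ) (hB : 0 < B) (hBB' : B ≤ B') :
    (∀ x y : EReal, x ≠ ⊥ → y ≠ ⊥ → eplus B' x y ≤ eplus B x y) ∧
    (∀ (u : ℕ → V) (k : ℕ), IsPath Arc u k →
      dE B' B' (fun i => c (u i) (u (i + 1))) k ≤ dE B B (fun i => c (u i) (u (i + 1))) k) ∧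
    (∀ (u : ℕ → V) (k : ℕ), IsPath Arc u k →
      Trav B B (fun i => c (u i) (u (i + 1))) k →
      Trav B' B' (fun i => c (u i) (u (i + 1))) k) ∧
    (∀ s t : V, deltaE Arc c B' B' s t ≤ deltaE Arc c B B s t) :=
  capacity_monotone_general Arc c B B' hBB'
end

section
/- Let G = (V, A, c) be a finite weighted directed graph with no negative cycles, let B > 0, 0 ≤ b ≤ B, and let s, t ∈ V with δ(s, t) < ∞. Then δ_{B,b}(s, t) = δ(s, t) if and only if there exists a shortest s–t path P (i.e., with c(P) = δ(s, t)) such that the total cost of every prefix u₀…u_i of P lies in the interval [b − B, b]. -/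
open scoped Classical

section Aux

variable {V : Type*}

lemma batt_shift (B b : ℝ) (cst : ℕ → ℝ) (p : ℕ) :
    ∀ j, batt B b cst (p + j) = batt B (batt B b cst p) (fun i => cst (p + i)) j := by
  intro j
  induction j with
  | zero => rfl
  | succ j ih =>
    show batt B b cst ((p + j) + 1) = _
    rw [batt, batt, ih]

lemma batt_mono (B : ℝ) {b b' : ℝ} (h : b ≤ b') (cst : ℕ → ℝ) :
    ∀ i, batt B b cst i ≤ batt B b' cst i := by
  intro i
  induction i with
  | zero => exact h
  | succ i ih =>
    rw [batt, batt]
    exact min_le_min (by linarith) le_rfl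

lemma batt_congr (B b : ℝ) {cst cst' : ℕ → ℝ} {k : ℕ} (h : ∀ i < k, cst i = cst' i) :
    ∀ i ≤ k, batt B b cst i = batt B b cst' i := by
  intro i
  induction i with
  | zero => intro _; rfl
  | succ i ih =>
    intro hi
    rw [batt, batt, ih (by omega), h i (by omega)]

lemma batt_le_sub_sum (B b : ℝ) (cst : ℕ → ℝ) :
    ∀ k, batt B b cst k ≤ b - ∑ i ∈ Finset.range k, cst i := by
  intro k
  induction k with
  | zero => simp [batt]
  | succ k ih =>
    rw [Finset.sum_range_succ]
    calc batt B b cst (k + 1) ≤ batt B b cst k - cst k := min_le_left _ _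
    _ ≤ _ := by linarith

lemma sum_le_dE (B b : ℝ) (cst : ℕ → ℝ) (k : ℕ) :
    ((∑ i ∈ Finset.range k, cst i : ℝ) : EReal) ≤ dE B b cst k := by
  unfold dE
  split
  · exact EReal.coe_le_coe_iff.mpr (by have := batt_le_sub_sum B b cst k; linarith)
  · exact le_top

lemma dE_congr (B b : ℝ) {cst cst' : ℕ → ℝ} {k : ℕ} (h : ∀ i < k, cst i = cst' i) :
    dE B b cst k = dE B b cst' k := by
  have hb := batt_congr B b h
  have hT : Trav B b cst k ↔ Trav B b cst' k := by
    constructor <;> intro hT i hik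
    · rw [← hb i hik.le, ← h i hik]; exact hT i hik
    · rw [hb i hik.le, h i hik]; exact hT i hik
  unfold dE
  by_cases h1 : Trav B b cst k
  · rw [if_pos h1, if_pos (hT.mp h1), hb k le_rfl]
  · rw [if_neg h1, if_neg (fun h2 => h1 (hT.mpr h2))]

lemma distE_le_deltaE (Arc : V → V → Prop) (c : V → V → ℝ) (B b : ℝ) (s t : V) :
    distE Arc c s t ≤ deltaE Arc c B b s t := by
  refine le_sInf fun x hx => ?_
  obtain ⟨u, k, h1, h2, h3, rfl⟩ := hx
  exact le_trans (sInf_le ⟨u, k, h1, h2, h3, rfl⟩) (sum_le_dE _ _ _ _)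

lemma batt_of_bounds {B b : ℝ} (hbB : b ≤ B) {cst : ℕ → ℝ} {k : ℕ}
    (h : ∀ i ≤ k, b - B ≤ ∑ j ∈ Finset.range i, cst j ∧ ∑ j ∈ Finset.range i, cst j ≤ b) :
    ∀ i ≤ k, batt B b cst i = b - ∑ j ∈ Finset.range i, cst j := by
  intro i
  induction i with
  | zero => intro _; simp [batt]
  | succ i ih =>
    intro hi
    have h1 := (h (i + 1) hi).1
    rw [batt, ih (by omega), Finset.sum_range_succ]
    rw [Finset.sum_range_succ] at h1
    rw [min_eq_left (by linarith)]
    ring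

lemma trav_of_bounds {B b : ℝ} (hbB : b ≤ B) {cst : ℕ → ℝ} {k : ℕ}
    (h : ∀ i ≤ k, b - B ≤ ∑ j ∈ Finset.range i, cst j ∧ ∑ j ∈ Finset.range i, cst j ≤ b) :
    Trav B b cst k := by
  intro i hik
  rw [batt_of_bounds hbB h i hik.le]
  have h2 := (h (i + 1) hik).2
  rw [Finset.sum_range_succ] at h2
  linarith

lemma splice (Arc : V → V → Prop) (c : V → V → ℝ) (hNC : NoNegCycles Arc c)
    (B b : ℝ) (u : ℕ → V) (k p q : ℕ) (hpq : p < q) (hqk : q ≤ k)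
    (hu : IsPath Arc u k) (hupq : u p = u q) :
    ∃ (u' : ℕ → V) (k' : ℕ), k' < k ∧ IsPath Arc u' k' ∧ u' 0 = u 0 ∧ u' k' = u k ∧
      (∑ i ∈ Finset.range k', c (u' i) (u' (i + 1))) ≤
        (∑ i ∈ Finset.range k, c (u i) (u (i + 1))) ∧
      dE B b (fun i => c (u' i) (u' (i + 1))) k' ≤
        dE B b (fun i => c (u i) (u (i + 1))) k := by
  classical
  obtain ⟨d, hd⟩ : ∃ d, d = q - p := ⟨_, rfl⟩
  set u' : ℕ → V := fun i => if i < p then u i else u (i + d) with hu'def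
  obtain ⟨k', hk'⟩ : ∃ k', k' = k - d := ⟨_, rfl⟩
  set cst : ℕ → ℝ := fun i => c (u i) (u (i + 1)) with hcst
  set cst' : ℕ → ℝ := fun i => c (u' i) (u' (i + 1)) with hcst'
  have hge : ∀ i, p ≤ i → u' i = u (i + d) := by
    intro i hi; simp only [hu'def, if_neg (by omega : ¬ i < p)]
  have hple : ∀ i, i ≤ p → u' i = u i := by
    intro i hi
    rcases lt_or_eq_of_le hi with h | h
    · simp only [hu'def, if_pos h]
    · subst h
      rw [hge i le_rfl, show i + d = q by omega, ← hupq]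
  have hc1 : ∀ i, i < p → cst' i = cst i := by
    intro i hi
    simp only [hcst', hcst, hple i hi.le, hple (i + 1) (by omega)]
  have hc2 : ∀ i, cst' (p + i) = cst (q + i) := by
    intro i
    simp only [hcst', hcst, hge (p + i) (by omega), hge (p + i + 1) (by omega)]
    rw [show p + i + d = q + i by omega, show p + i + 1 + d = q + i + 1 by omega]
  have hpath' : IsPath Arc u' k' := by
    intro i hik'
    rcases lt_or_ge i p with h | h
    · rw [hple i h.le, hple (i + 1) (by omega)]
      exact hu i (by omega)
    · rw [hge i h, hge (i + 1) (by omega), show i + 1 + d = (i + d) + 1 by omega]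
      exact hu (i + d) (by omega)
  have h0' : u' 0 = u 0 := hple 0 (Nat.zero_le _)
  have hk'' : u' k' = u k := by
    rw [hge k' (by omega), show k' + d = k by omega]
  have hcyc : 0 ≤ ∑ j ∈ Finset.range d, cst (p + j) := by
    have hcy : IsPath Arc (fun j => u (p + j)) d := by
      intro j hj
      exact hu (p + j) (by omega)
    have hcl : (fun j => u (p + j)) d = (fun j => u (p + j)) 0 := by
      show u (p + d) = u (p + 0)
      rw [show p + d = q by omega, show p + 0 = p from rfl]
      exact hupq.symm
    have := hNC (fun j => u (p + j)) d hcy hcl (by omega)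
    exact this
  have e1 : ∑ i ∈ Finset.range q, cst i + ∑ j ∈ Finset.range (k - q), cst (q + j)
      = ∑ i ∈ Finset.range k, cst i := by
    have h := Finset.sum_range_add cst q (k - q)
    rw [Nat.add_sub_cancel' hqk] at h
    exact h.symm
  have e2 : ∑ i ∈ Finset.range p, cst i + ∑ j ∈ Finset.range d, cst (p + j)
      = ∑ i ∈ Finset.range q, cst i := by
    have h := Finset.sum_range_add cst p d
    rw [show p + d = q by omega] at h
    exact h.symm
  have e3 : ∑ i ∈ Finset.range k', cst' i
      = ∑ i ∈ Finset.range p, cst i + ∑ j ∈ Finset.range (k - q), cst (q + j) := by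
    have h := Finset.sum_range_add cst' p (k - q)
    rw [show p + (k - q) = k' by omega] at h
    have hA : ∑ i ∈ Finset.range p, cst' i = ∑ i ∈ Finset.range p, cst i :=
      Finset.sum_congr rfl fun i hi => hc1 i (Finset.mem_range.mp hi)
    have hB : ∑ j ∈ Finset.range (k - q), cst' (p + j)
        = ∑ j ∈ Finset.range (k - q), cst (q + j) :=
      Finset.sum_congr rfl fun j _ => hc2 j
    rw [h, hA, hB]
  have hsum : ∑ i ∈ Finset.range k', cst' i ≤ ∑ i ∈ Finset.range k, cst i := by
    rw [e3]; linarith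
  have hbc : ∀ i ≤ p, batt B b cst' i = batt B b cst i :=
    batt_congr B b (fun i hi => hc1 i hi)
  have hqp : batt B b cst q ≤ batt B b cst p := by
    have h1 := batt_shift B b cst p d
    rw [show p + d = q by omega] at h1
    have h2 := batt_le_sub_sum B (batt B b cst p) (fun i => cst (p + i)) d
    rw [← h1] at h2
    linarith
  have hC : ∀ j, batt B b cst (q + j) ≤ batt B b cst' (p + j) := by
    intro j
    rw [batt_shift B b cst q j, batt_shift B b cst' p j, hbc p le_rfl]
    have hfun : (fun i => cst' (p + i)) = fun i => cst (q + i) := funext hc2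
    rw [hfun]
    exact batt_mono B hqp _ j
  refine ⟨u', k', by omega, hpath', h0', hk'', hsum, ?_⟩
  show dE B b cst' k' ≤ dE B b cst k
  by_cases hT : Trav B b cst k
  · have hT' : Trav B b cst' k' := by
      intro i hik'
      rcases lt_or_ge i p with h | h
      · rw [hc1 i h, hbc i h.le]
        exact hT i (by omega)
      · obtain ⟨j, rfl⟩ : ∃ j, i = p + j := ⟨i - p, by omega⟩
        rw [hc2 j]
        exact le_trans (hT (q + j) (by omega)) (hC j)
    have hfin : batt B b cst k ≤ batt B b cst' k' := by
      have := hC (k - q)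
      rwa [show q + (k - q) = k by omega, show p + (k - q) = k' by omega] at this
    unfold dE
    rw [if_pos hT, if_pos hT']
    exact EReal.coe_le_coe_iff.mpr (by linarith)
  · unfold dE
    rw [if_neg hT]
    exact le_top

lemma shorten [Fintype V] (Arc : V → V → Prop) (c : V → V → ℝ) (hNC : NoNegCycles Arc c)
    (B b : ℝ) :
    ∀ k, ∀ u : ℕ → V, IsPath Arc u k →
      ∃ (u' : ℕ → V) (k' : ℕ), k' < Fintype.card V ∧ IsPath Arc u' k' ∧ u' 0 = u 0 ∧
        u' k' = u k ∧
        (∑ i ∈ Finset.range k', c (u' i) (u' (i + 1))) ≤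
          (∑ i ∈ Finset.range k, c (u i) (u (i + 1))) ∧
        dE B b (fun i => c (u' i) (u' (i + 1))) k' ≤
          dE B b (fun i => c (u i) (u (i + 1))) k := by
  intro k
  induction k using Nat.strong_induction_on with
  | _ k ih =>
    intro u hu
    by_cases hk : k < Fintype.card V
    · exact ⟨u, k, hk, hu, rfl, rfl, le_rfl, le_rfl⟩
    · have hcard : Fintype.card V < Fintype.card (Fin (k + 1)) := by
        rw [Fintype.card_fin]; omega
      obtain ⟨a, b', hab, hfab⟩ :=
        Fintype.exists_ne_map_eq_of_card_lt (fun i : Fin (k + 1) => u i) hcard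
      have hex : ∃ p q : ℕ, p < q ∧ q ≤ k ∧ u p = u q := by
        rcases Ne.lt_or_gt hab with h | h
        · exact ⟨a, b', h, by omega, hfab⟩
        · exact ⟨b', a, h, by omega, hfab.symm⟩
      obtain ⟨p, q, hpq, hqk, hupq⟩ := hex
      obtain ⟨u', k', hk'k, hp', h0', hke, hs', hd'⟩ :=
        splice Arc c hNC B b u k p q hpq hqk hu hupq
      obtain ⟨u'', k'', h1, h2, h3, h4, h5, h6⟩ := ih k' hk'k u' hp'
      exact ⟨u'', k'', h1, h2, h3.trans h0', h4.trans hke, h5.trans hs', h6.trans hd'⟩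

lemma deltaE_attained [Fintype V] (Arc : V → V → Prop) (c : V → V → ℝ)
    (hNC : NoNegCycles Arc c) (B b : ℝ) (s t : V)
    (hne : ∃ (u : ℕ → V) (k : ℕ), IsPath Arc u k ∧ u 0 = s ∧ u k = t) :
    ∃ (u : ℕ → V) (k : ℕ), IsPath Arc u k ∧ u 0 = s ∧ u k = t ∧
      dE B b (fun i => c (u i) (u (i + 1))) k = deltaE Arc c B b s t := by
  classical
  have hn : 0 < Fintype.card V := Fintype.card_pos_iff.mpr ⟨s⟩
  set n := Fintype.card V with hnn
  set D : Set EReal := { x : EReal | ∃ (u : ℕ → V) (k : ℕ), IsPath Arc u k ∧ u 0 = s ∧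
    u k = t ∧ x = dE B b (fun i => c (u i) (u (i + 1))) k } with hD
  set D' : Set EReal := { x : EReal | ∃ (u : ℕ → V) (k : ℕ), k < n ∧ IsPath Arc u k ∧
    u 0 = s ∧ u k = t ∧ x = dE B b (fun i => c (u i) (u (i + 1))) k } with hD'
  have hsub : D' ⊆ D := by
    rintro x ⟨u, k, _, h1, h2, h3, h4⟩
    exact ⟨u, k, h1, h2, h3, h4⟩
  have hdom : ∀ x ∈ D, ∃ y ∈ D', y ≤ x := by
    rintro x ⟨u, k, h1, h2, h3, rfl⟩
    obtain ⟨u', k', hk', hp', h0', hke, _, hd'⟩ := shorten Arc c hNC B b k u h1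
    exact ⟨_, ⟨u', k', hk', hp', h0'.trans h2, hke.trans h3, rfl⟩, hd'⟩
  have hne' : D'.Nonempty := by
    obtain ⟨u, k, h1, h2, h3⟩ := hne
    obtain ⟨y, hy, _⟩ := hdom _ ⟨u, k, h1, h2, h3, rfl⟩
    exact ⟨y, hy⟩
  have hfin : D'.Finite := by
    have hsr : D' ⊆ Set.range (fun p : (Fin n → V) × Fin n =>
        dE B b (fun i => c (p.1 ⟨i % n, Nat.mod_lt _ hn⟩)
          (p.1 ⟨(i + 1) % n, Nat.mod_lt _ hn⟩)) p.2) := by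
      rintro x ⟨u, k, hk, h1, h2, h3, rfl⟩
      refine ⟨⟨fun j => u j, ⟨k, hk⟩⟩, ?_⟩
      simp only []
      exact dE_congr B b fun i hi => by
        rw [Nat.mod_eq_of_lt (by omega), Nat.mod_eq_of_lt (by omega)]
    exact Set.Finite.subset (Set.finite_range _) hsr
  have heq : sInf D = sInf D' := le_antisymm (sInf_le_sInf hsub)
    (le_sInf fun x hx => by
      obtain ⟨y, hy, hyx⟩ := hdom x hx
      exact le_trans (sInf_le hy) hyx)
  have hmem : sInf D' ∈ D' := hne'.csInf_mem hfin
  have hdelta : deltaE Arc c B b s t = sInf D := rfl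
  obtain ⟨u, k, hk, h1, h2, h3, h4⟩ := hmem
  exact ⟨u, k, h1, h2, h3, by rw [← h4, ← heq, hdelta]⟩

end Aux

/-- for a finite graph with no negative cycles, `B > 0`, `0 ≤ b ≤ B` and
`δ(s,t) < ∞`, one has `δ_{B,b}(s,t) = δ(s,t)` iff there is a shortest `s`–`t` path all
of whose prefix total costs lie in `[b − B, b]`. -/
theorem delta_eq_dist_iff {V : Type*} [Fintype V] (Arc : V → V → Prop)
    (c : V → V → ℝ) (hNC : NoNegCycles Arc c) (B b : ℝ) (hB : 0 < B)
    (hb0 : 0 ≤ b) (hbB : b ≤ B) (s t : V) (hfin : distE Arc c s t < ⊤) :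
    deltaE Arc c B b s t = distE Arc c s t ↔
      ∃ (u : ℕ → V) (k : ℕ), IsPath Arc u k ∧ u 0 = s ∧ u k = t ∧
        ((∑ i ∈ Finset.range k, c (u i) (u (i + 1)) : ℝ) : EReal) = distE Arc c s t ∧
        ∀ i ≤ k, b - B ≤ (∑ j ∈ Finset.range i, c (u j) (u (j + 1))) ∧
          (∑ j ∈ Finset.range i, c (u j) (u (j + 1))) ≤ b := by
  constructor
  · intro heq
    have hset : { x : EReal | ∃ (u : ℕ → V) (k : ℕ), IsPath Arc u k ∧ u 0 = s ∧ u k = t ∧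
        x = ((∑ i ∈ Finset.range k, c (u i) (u (i + 1)) : ℝ) : EReal) }.Nonempty := by
      by_contra h
      rw [Set.not_nonempty_iff_eq_empty] at h
      have h2 : distE Arc c s t = ⊤ := by rw [distE, h, sInf_empty]
      rw [h2] at hfin
      exact lt_irrefl _ hfin
    obtain ⟨x, u0, k0, hp0, h00, hk0, _⟩ := hset
    obtain ⟨u, k, hp, h0, hk, hdE⟩ :=
      deltaE_attained Arc c hNC B b s t ⟨u0, k0, hp0, h00, hk0⟩
    set cst : ℕ → ℝ := fun i => c (u i) (u (i + 1)) with hcst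
    have hT : Trav B b cst k := by
      by_contra hT
      have htop : dE B b cst k = ⊤ := by unfold dE; rw [if_neg hT]
      rw [htop, heq] at hdE
      rw [← hdE] at hfin
      exact lt_irrefl _ hfin
    have hdE' : dE B b cst k = ((b - batt B b cst k : ℝ) : EReal) := by
      unfold dE; rw [if_pos hT]
    have hle1 : distE Arc c s t ≤ ((∑ i ∈ Finset.range k, cst i : ℝ) : EReal) :=
      sInf_le ⟨u, k, hp, h0, hk, rfl⟩
    have hle2 : (∑ i ∈ Finset.range k, cst i) ≤ b - batt B b cst k := by
      have := batt_le_sub_sum B b cst k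
      linarith
    have hbd : ((b - batt B b cst k : ℝ) : EReal) = distE Arc c s t := by
      rw [← hdE', hdE, heq]
    have hS : ((∑ i ∈ Finset.range k, cst i : ℝ) : EReal) = distE Arc c s t := by
      refine le_antisymm ?_ hle1
      rw [← hbd]
      exact EReal.coe_le_coe_iff.mpr hle2
    have hbk : batt B b cst k = b - ∑ i ∈ Finset.range k, cst i := by
      have h5 : ((b - batt B b cst k : ℝ) : EReal)
          = ((∑ i ∈ Finset.range k, cst i : ℝ) : EReal) := by rw [hbd, hS]
      have := EReal.coe_eq_coe_iff.mp h5
      linarith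
    have hbi : ∀ i ≤ k, batt B b cst i = b - ∑ j ∈ Finset.range i, cst j := by
      intro i hik
      have h1 : batt B b cst i ≤ b - ∑ j ∈ Finset.range i, cst j := batt_le_sub_sum B b cst i
      have h2 : batt B b cst k ≤ batt B b cst i - ∑ j ∈ Finset.range (k - i), cst (i + j) := by
        have hs := batt_shift B b cst i (k - i)
        rw [show i + (k - i) = k by omega] at hs
        rw [hs]
        exact batt_le_sub_sum B _ _ (k - i)
      have h3 : (∑ j ∈ Finset.range i, cst j) + ∑ j ∈ Finset.range (k - i), cst (i + j)
          = ∑ j ∈ Finset.range k, cst j := by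
        have h := Finset.sum_range_add cst i (k - i)
        rw [Nat.add_sub_cancel' hik] at h
        exact h.symm
      rw [hbk] at h2
      linarith
    refine ⟨u, k, hp, h0, hk, hS, ?_⟩
    intro i hik
    constructor
    · cases i with
      | zero =>
        rw [Finset.sum_range_zero]
        linarith
      | succ j =>
        have h5 : batt B b cst (j + 1) ≤ B := min_le_right _ _
        rw [hbi (j + 1) hik] at h5
        linarith
    · cases i with
      | zero =>
        rw [Finset.sum_range_zero]
        exact hb0
      | succ j =>
        have h4 : cst j ≤ batt B b cst j := hT j (by omega)
        have h5 : (0 : ℝ) ≤ batt B b cst (j + 1) := by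
          rw [batt]
          exact le_min (by linarith) hB.le
        rw [hbi (j + 1) hik] at h5
        linarith
  · rintro ⟨u, k, hp, h0, hk, hsum, hbd⟩
    set cst : ℕ → ℝ := fun i => c (u i) (u (i + 1)) with hcst
    have hbnd : ∀ i ≤ k, b - B ≤ ∑ j ∈ Finset.range i, cst j ∧ ∑ j ∈ Finset.range i, cst j ≤ b :=
      fun i hi => hbd i hi
    have hT : Trav B b cst k := trav_of_bounds hbB hbnd
    have hbk := batt_of_bounds hbB hbnd k le_rfl
    refine le_antisymm ?_ (distE_le_deltaE Arc c B b s t)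
    calc deltaE Arc c B b s t ≤ dE B b cst k := sInf_le ⟨u, k, hp, h0, hk, rfl⟩
      _ = ((∑ i ∈ Finset.range k, cst i : ℝ) : EReal) := by
          unfold dE
          rw [if_pos hT, hbk]
          exact EReal.coe_eq_coe_iff.mpr (by ring)
      _ = distE Arc c s t := hsum
end

section
/- Verification of energetic costs (Corollary 1): let G = (V, A, c) be a finite weighted directed graph, B > 0, s ∈ V, and d : V → ℝ ∪ {∞} a function such that (i) d(s) = 0; (ii) for every v with d(v) < ∞ there exists an s–v path P with d_B(P) = d(v); and (iii) d(v) ≤ d(u) ⊕_B c(uv) for every arc uv ∈ A. Then d(v) = δ_B(s, v) for every v ∈ V. -/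
open scoped Classical

/-!
Along a path `u₀ … u_k` from `s` traversable with a full battery, condition (iii) propagates
the invariant `d(u_i) ≤ B - b_i` (initially `0 = B - B`), since `⊕_B` clamps exactly like the
battery does; hence `d(v) ≤ d_B(P)` for every `s`–`v` path `P`, i.e. `d(v) ≤ δ_B(s, v)`.
Condition (ii) supplies a path realising `d(v)` whenever it is finite.
-/

theorem eplus_le_sub_batt_step {B β γ : ℝ} {x : EReal} (hx_bot : x ≠ ⊥)
    (hx : x ≤ ((B - β : ℝ) : EReal)) (hγ : γ ≤ β) :
    eplus B x (γ : EReal) ≤ ((B - min (β - γ) B : ℝ) : EReal) := by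
  have hx_top : x ≠ ⊤ := ne_top_of_le_ne_top (EReal.coe_ne_top _) hx
  lift x to ℝ using ⟨hx_top, hx_bot⟩
  have hxβ : x ≤ B - β := mod_cast hx
  have hmin : min (β - γ) B ≤ β - γ := min_le_left _ _
  have hsum : x + γ ≤ B := by linarith
  unfold eplus
  rw [← EReal.coe_add]
  split_ifs with _ hle
  · exact mod_cast sub_nonneg.mpr (min_le_right _ _)
  · exact mod_cast (by linarith : x + γ ≤ B - min (β - γ) B)
  · exact absurd (mod_cast hsum) hle

theorem le_sub_batt_of_trav {B : ℝ} {cst : ℕ → ℝ} {k : ℕ} (hT : Trav B B cst k)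
    {e : ℕ → EReal} (he_bot : ∀ i, e i ≠ ⊥) (he0 : e 0 = 0)
    (hstep : ∀ i, i < k → e (i + 1) ≤ eplus B (e i) (cst i : EReal)) :
    ∀ i, i ≤ k → e i ≤ ((B - batt B B cst i : ℝ) : EReal)
  | 0, _ => by simp [batt, he0]
  | i + 1, hik =>
    (hstep i hik).trans <|
      eplus_le_sub_batt_step (he_bot i) (le_sub_batt_of_trav hT he_bot he0 hstep i (Nat.le_of_succ_le hik))
        (hT i hik)

theorem le_dE_of_isPath {V : Type*} {Arc : V → V → Prop} {c : V → V → ℝ} {B : ℝ}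
    {d : V → EReal} (hbot : ∀ v, d v ≠ ⊥)
    (htri : ∀ u v, Arc u v → d v ≤ eplus B (d u) ((c u v : ℝ) : EReal))
    {u : ℕ → V} {k : ℕ} (hp : IsPath Arc u k) (h0 : d (u 0) = 0) :
    d (u k) ≤ dE B B (fun i => c (u i) (u (i + 1))) k := by
  unfold dE
  split_ifs with hT
  · exact le_sub_batt_of_trav hT (fun i => hbot _) h0 (fun i hi => htri _ _ (hp i hi)) k le_rfl
  · exact le_top

theorem verify_energetic_costs_general {V : Type*} (Arc : V → V → Prop)
    (c : V → V → ℝ) (B : ℝ) (s : V) (d : V → EReal)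
    (hbot : ∀ v, d v ≠ ⊥) (hds : d s = 0)
    (hwit : ∀ v, d v ≠ ⊤ → ∃ (u : ℕ → V) (k : ℕ), IsPath Arc u k ∧ u 0 = s ∧ u k = v ∧
      dE B B (fun i => c (u i) (u (i + 1))) k = d v)
    (htri : ∀ u v, Arc u v → d v ≤ eplus B (d u) ((c u v : ℝ) : EReal)) :
    ∀ v, d v = deltaE Arc c B B s v := by
  intro v
  refine le_antisymm (le_sInf ?_) ?_
  · rintro x ⟨u, k, hp, h0, rfl, rfl⟩
    exact le_dE_of_isPath hbot htri hp (h0 ▸ hds)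
  · obtain htop | hfin := eq_or_ne (d v) ⊤
    · exact htop ▸ le_top
    · obtain ⟨u, k, hp, h0, hk, hcost⟩ := hwit v hfin
      exact sInf_le ⟨u, k, hp, h0, hk, hcost.symm⟩

/-- verification of energetic costs, Corollary 1: if `d : V → ℝ ∪ {∞}`
satisfies `d(s) = 0`, every finite `d(v)` is the energetic cost of some `s`–`v` path,
and `d(v) ≤ d(u) ⊕_B c(uv)` for every arc `uv`, then `d(v) = δ_B(s,v)` for all `v`. -/
theorem verify_energetic_costs {V : Type*} [Fintype V] (Arc : V → V → Prop)
    (c : V → V → ℝ) (B : ℝ) (hB : 0 < B) (s : V) (d : V → EReal)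
    (hbot : ∀ v, d v ≠ ⊥) (hds : d s = 0)
    (hwit : ∀ v, d v ≠ ⊤ → ∃ (u : ℕ → V) (k : ℕ), IsPath Arc u k ∧ u 0 = s ∧ u k = v ∧
      dE B B (fun i => c (u i) (u (i + 1))) k = d v)
    (htri : ∀ u v, Arc u v → d v ≤ eplus B (d u) ((c u v : ℝ) : EReal)) :
    ∀ v, d v = deltaE Arc c B B s v :=
  verify_energetic_costs_general Arc c B s d hbot hds hwit htri
end

section
/- Monotonicity of potential-adjusted energetic costs along a path (core of the A* invariant): let G = (V, A, c) be a weighted directed graph, B > 0, and p : V → ℝ a valid potential. If the path P = u₀u₁…u_k is traversable from a full battery of capacity B, and d_i denotes the energetic cost d_B(u₀…u_i) of the i-th prefix of P, then the sequence d_i + p(u_i), i = 0, 1, …, k, is nondecreasing. -/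
open scoped Classical

section Battery

variable {B b : ℝ} {cst : ℕ → ℝ} {k m : ℕ}

lemma batt_succ_le (B b : ℝ) (cst : ℕ → ℝ) (i : ℕ) :
    batt B b cst (i + 1) ≤ batt B b cst i - cst i :=
  min_le_left _ _

lemma Trav.mono (hT : Trav B b cst k) (hm : m ≤ k) : Trav B b cst m :=
  fun i hi => hT i (hi.trans_le hm)

lemma dE_of_trav (hT : Trav B b cst k) : dE B b cst k = ((b - batt B b cst k : ℝ) : EReal) :=
  if_pos hT

/-- The clamp at `B` only lowers the charge, so each arc spends at least
`cst n ≥ q n - q (n + 1)`. -/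
lemma monotoneOn_sub_batt_add (q : ℕ → ℝ) (hq : ∀ n < k, 0 ≤ cst n - q n + q (n + 1)) :
    MonotoneOn (fun n => b - batt B b cst n + q n) (Set.Iic k) := by
  refine monotoneOn_of_le_succ Set.ordConnected_Iic fun n _ _ hn => ?_
  rw [Nat.succ_eq_succ, Set.mem_Iic, Nat.succ_le_iff] at hn
  rw [Nat.succ_eq_succ]
  have hcharge := batt_succ_le B b cst n
  have hreduced := hq n hn
  linarith

end Battery

theorem potential_adjusted_cost_monotone_general {V : Type*} (Arc : V → V → Prop)
    (c : V → V → ℝ) (B : ℝ) (p : V → ℝ)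
    (hp : ∀ u v, Arc u v → 0 ≤ c u v - p u + p v)
    (u : ℕ → V) (k : ℕ) (hP : IsPath Arc u k)
    (hT : Trav B B (fun i => c (u i) (u (i + 1))) k) :
    ∀ i j, i ≤ j → j ≤ k →
      dE B B (fun i => c (u i) (u (i + 1))) i + ((p (u i) : ℝ) : EReal) ≤
        dE B B (fun i => c (u i) (u (i + 1))) j + ((p (u j) : ℝ) : EReal) := by
  intro i j hij hjk
  rw [dE_of_trav (hT.mono (hij.trans hjk)), dE_of_trav (hT.mono hjk), ← EReal.coe_add,
    ← EReal.coe_add, EReal.coe_le_coe_iff]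
  exact monotoneOn_sub_batt_add (p ∘ u) (fun n hn => hp _ _ (hP n hn))
    (Set.mem_Iic.mpr (hij.trans hjk)) (Set.mem_Iic.mpr hjk) hij

/-- core of the A* invariant: if `p` is a valid potential and the path
`u₀…u_k` is traversable from a full battery of capacity `B`, then the sequence
`d_i + p(u_i)` of potential-adjusted energetic costs of prefixes is nondecreasing. -/
theorem potential_adjusted_cost_monotone {V : Type*} [Fintype V] (Arc : V → V → Prop)
    (c : V → V → ℝ) (B : ℝ) (hB : 0 < B) (p : V → ℝ)
    (hp : ∀ u v, Arc u v → 0 ≤ c u v - p u + p v)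
    (u : ℕ → V) (k : ℕ) (hP : IsPath Arc u k)
    (hT : Trav B B (fun i => c (u i) (u (i + 1))) k) :
    ∀ i j, i ≤ j → j ≤ k →
      dE B B (fun i => c (u i) (u (i + 1))) i + ((p (u i) : ℝ) : EReal) ≤
        dE B B (fun i => c (u i) (u (i + 1))) j + ((p (u j) : ℝ) : EReal) :=
  potential_adjusted_cost_monotone_general Arc c B p hp u k hP hT
end

section
/- Minimum initial charge of a path (Lemma 3): let P = u₀u₁…u_k be a path with arc costs c_i = c(u_{i−1}u_i) and let B > 0. Define r(P) = c₁ ⊕_B (c₂ ⊕_B (⋯ ⊕_B (c_{k−1} ⊕_B (c_k ⊕_B 0))⋯)) for k > 0 and r(P) = 0 for k = 0; equivalently, writing P' = u₁…u_k, r(P) = c₁ ⊕_B r(P') for k > 0. Then for every b with 0 ≤ b ≤ B, P is traversable from initial charge b if and only if r(P) is finite and b ≥ r(P); consequently the minimum initial charge b_B(P) equals r(P). -/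
open scoped Classical

/-- The right-nested value `r(P) = c₁ ⊕_B (c₂ ⊕_B (⋯ ⊕_B (c_{k−1} ⊕_B (c_k ⊕_B 0))⋯))`
(with `c_i = cst (i-1)`); equivalently `r(P) = c₁ ⊕_B r(P')` where `P'` drops the
first arc, and `r(P) = 0` for `k = 0`. -/
noncomputable def rInit (B : ℝ) : (ℕ → ℝ) → ℕ → EReal
  | _, 0 => 0
  | cst, k + 1 => eplus B ((cst 0 : ℝ) : EReal) (rInit B (fun i => cst (i + 1)) k)

/-! Unfolding one arc at a time, traversability from `b` becomes `c₁ ≤ b` together with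
traversability of `P'` from `min (b - c₁) B`; by induction the latter is `r(P') ≤ min (b - c₁) B`,
and since `r(P')` is `∞` or lies in `[0, B]`, a case split on the clamping in `c₁ ⊕_B r(P')`
shows that the conjunction is exactly `r(P) = c₁ ⊕_B r(P') ≤ b`. Hence the feasible initial
charges in `[0, B]` are those above `r(P)`, and their infimum is `r(P)`. -/

lemma exists_coe_of_mem_Icc {B : ℝ} {r : EReal} (hr : r ∈ Set.Icc 0 (B : EReal)) :
    ∃ x ∈ Set.Icc 0 B, (x : EReal) = r := by
  rwa [← EReal.coe_zero, ← EReal.image_coe_Icc] at hr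

lemma eplus_coe_top (B c : ℝ) : eplus B c ⊤ = ⊤ := by
  simp [eplus]

lemma eplus_eq_top_or_mem_Icc {B : ℝ} (hB : 0 ≤ B) (x y : EReal) :
    eplus B x y = ⊤ ∨ eplus B x y ∈ Set.Icc 0 (B : EReal) := by
  unfold eplus
  split_ifs with hneg hle
  · exact Or.inr ⟨le_rfl, EReal.coe_nonneg.mpr hB⟩
  · exact Or.inr ⟨not_lt.mp hneg, hle⟩
  · exact Or.inl rfl

lemma rInit_eq_top_or_mem_Icc {B : ℝ} (hB : 0 ≤ B) (cst : ℕ → ℝ) :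
    ∀ k, rInit B cst k = ⊤ ∨ rInit B cst k ∈ Set.Icc 0 (B : EReal)
  | 0 => Or.inr ⟨le_rfl, EReal.coe_nonneg.mpr hB⟩
  | _ + 1 => eplus_eq_top_or_mem_Icc hB _ _

lemma eplus_le_coe_iff {B b c : ℝ} {r : EReal} (hr : r = ⊤ ∨ r ∈ Set.Icc 0 (B : EReal))
    (hb0 : 0 ≤ b) (hbB : b ≤ B) :
    eplus B c r ≤ b ↔ c ≤ b ∧ r ≤ ((min (b - c) B : ℝ) : EReal) := by
  rcases hr with rfl | hr
  · simp [eplus_coe_top]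
  obtain ⟨r, ⟨hr0, hrB⟩, rfl⟩ := exists_coe_of_mem_Icc hr
  simp only [eplus, ← EReal.coe_add]
  norm_cast
  rw [le_min_iff]
  split_ifs with hneg hle
  · exact iff_of_true (EReal.coe_nonneg.mpr hb0) ⟨by linarith, by linarith, hrB⟩
  · rw [EReal.coe_le_coe_iff]
    exact ⟨fun h => ⟨by linarith, by linarith, hrB⟩, fun ⟨_, h, _⟩ => by linarith⟩
  · exact iff_of_false (by simp) fun ⟨_, h, _⟩ => hle (by linarith)

lemma batt_succ_eq_batt_tail (B b : ℝ) (cst : ℕ → ℝ) (i : ℕ) :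
    batt B b cst (i + 1) = batt B (min (b - cst 0) B) (fun j => cst (j + 1)) i := by
  induction i with
  | zero => rfl
  | succ i ih => rw [batt, ih]; rfl

lemma trav_succ_iff (B b : ℝ) (cst : ℕ → ℝ) (k : ℕ) :
    Trav B b cst (k + 1) ↔
      cst 0 ≤ b ∧ Trav B (min (b - cst 0) B) (fun j => cst (j + 1)) k := by
  simp only [Trav, Nat.forall_lt_succ_left, batt_succ_eq_batt_tail]
  rfl

theorem trav_iff_rInit_le {B b : ℝ} (cst : ℕ → ℝ) (k : ℕ) (hb0 : 0 ≤ b) (hbB : b ≤ B) :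
    Trav B b cst k ↔ rInit B cst k ≤ b := by
  induction k generalizing cst b with
  | zero => simpa [Trav, rInit] using hb0
  | succ k ih =>
    rw [trav_succ_iff, rInit, eplus_le_coe_iff (rInit_eq_top_or_mem_Icc (hb0.trans hbB) _ k) hb0
      hbB]
    exact and_congr_right fun hcb => ih _ (le_min (sub_nonneg.mpr hcb) (hb0.trans hbB))
      (min_le_right _ _)

lemma sInf_coe_of_iff_le {B : ℝ} {r : EReal} {p : ℝ → Prop}
    (hr : r = ⊤ ∨ r ∈ Set.Icc 0 (B : EReal)) (hp : ∀ b, 0 ≤ b → b ≤ B → (p b ↔ r ≤ b)) :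
    sInf { x : EReal | ∃ b : ℝ, 0 ≤ b ∧ b ≤ B ∧ p b ∧ x = b } = r := by
  refine le_antisymm ?_ (le_sInf ?_)
  · rcases hr with rfl | hr
    · exact le_top
    obtain ⟨r, ⟨hr0, hrB⟩, rfl⟩ := exists_coe_of_mem_Icc hr
    exact sInf_le ⟨r, hr0, hrB, (hp r hr0 hrB).mpr le_rfl, rfl⟩
  · rintro _ ⟨b, hb0, hbB, hpb, rfl⟩
    exact (hp b hb0 hbB).mp hpb

theorem min_initial_charge_eq_general {V : Type*}
    (c : V → V → ℝ) (B : ℝ) (hB : 0 < B) (u : ℕ → V) (k : ℕ) :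
    (∀ b : ℝ, 0 ≤ b → b ≤ B →
      (Trav B b (fun i => c (u i) (u (i + 1))) k ↔
        rInit B (fun i => c (u i) (u (i + 1))) k ≠ ⊤ ∧
        rInit B (fun i => c (u i) (u (i + 1))) k ≤ ((b : ℝ) : EReal))) ∧
    sInf { x : EReal | ∃ b : ℝ, 0 ≤ b ∧ b ≤ B ∧
        Trav B b (fun i => c (u i) (u (i + 1))) k ∧ x = ((b : ℝ) : EReal) } =
      rInit B (fun i => c (u i) (u (i + 1))) k := by
  refine ⟨fun b hb0 hbB => ?_, sInf_coe_of_iff_le (rInit_eq_top_or_mem_Icc hB.le _ k)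
    fun b hb0 hbB => trav_iff_rInit_le _ k hb0 hbB⟩
  rw [trav_iff_rInit_le _ k hb0 hbB]
  exact ⟨fun h => ⟨ne_top_of_le_ne_top (EReal.coe_ne_top b) h, h⟩, And.right⟩

/-- Lemma 3: for every `b ∈ [0, B]`, the path `P` is traversable from
initial charge `b` iff `r(P)` is finite and `b ≥ r(P)`; consequently the minimum
initial charge `b_B(P)` equals `r(P)`. -/
theorem min_initial_charge_eq {V : Type*} [Fintype V] (Arc : V → V → Prop)
    (c : V → V → ℝ) (B : ℝ) (hB : 0 < B) (u : ℕ → V) (k : ℕ) (hP : IsPath Arc u k) :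
    (∀ b : ℝ, 0 ≤ b → b ≤ B →
      (Trav B b (fun i => c (u i) (u (i + 1))) k ↔
        rInit B (fun i => c (u i) (u (i + 1))) k ≠ ⊤ ∧
        rInit B (fun i => c (u i) (u (i + 1))) k ≤ ((b : ℝ) : EReal))) ∧
    sInf { x : EReal | ∃ b : ℝ, 0 ≤ b ∧ b ≤ B ∧
        Trav B b (fun i => c (u i) (u (i + 1))) k ∧ x = ((b : ℝ) : EReal) } =
      rInit B (fun i => c (u i) (u (i + 1))) k :=
  min_initial_charge_eq_general c B hB u k
end

section
/- Minimum initial charges via the reversed graph (Corollary 2): let G = (V, A, c) be a finite weighted directed graph and B > 0. Then for every pair of vertices s, t ∈ V, the minimum initial charge β_B(s, t) required at s for getting to t equals the energetic cost of traveling from t to s in the reversed graph: β_B(s, t) = δ_B^{←G}(t, s). -/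
open scoped Classical

/-!
Compare a forward traversal of a path from charge `b` with a traversal of the reversed path
from a full battery, `β_j` being the charge after its first `j` arcs. As long as the forward
traversal succeeds, the charge at the `i`-th vertex plus `β_{k-i}` is at least `B`; for `i = 0`
this gives `b ≥ B - β_k`, and the reversed traversal cannot get stuck. Conversely, if the
reversed path is traversable, then starting from any `b ≥ B - β_k` the same sum stays at least
`B`, which keeps the forward traversal going. So the minimum initial charge of a path is
`B - β_k = d_B` of its reversal, and reversal is a bijection between `s`–`t` paths in `G` and
`t`–`s` paths in `←G`.
-/

def IsReverse {α : Type*} (f g : ℕ → α) (k : ℕ) : Prop :=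
  ∀ j < k, g j = f (k - 1 - j)

theorem IsReverse.symm {α : Type*} {f g : ℕ → α} {k : ℕ} (h : IsReverse f g k) :
    IsReverse g f k := by
  intro i hi
  rw [h (k - 1 - i) (by omega), show k - 1 - (k - 1 - i) = i by omega]

theorem IsPath.reverse {V : Type*} {Arc : V → V → Prop} {u : ℕ → V} {k : ℕ}
    (h : IsPath Arc u k) : IsPath (fun x y => Arc y x) (fun j => u (k - j)) k := by
  intro j hj
  have := h (k - 1 - j) (by omega)
  rwa [show k - 1 - j + 1 = k - j by omega, show k - 1 - j = k - (j + 1) by omega] at this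

theorem isReverse_costs_reverse {V : Type*} (c : V → V → ℝ) (u : ℕ → V) (k : ℕ) :
    IsReverse (fun i => c (u i) (u (i + 1))) (fun j => c (u (k - (j + 1))) (u (k - j))) k := by
  intro j hj
  simp only [show k - 1 - j = k - (j + 1) by omega, show k - (j + 1) + 1 = k - j by omega]

section Battery

variable {B b : ℝ} {cst rcst : ℕ → ℝ} {k : ℕ}

theorem batt_succ (i : ℕ) : batt B b cst (i + 1) = min (batt B b cst i - cst i) B := rfl

theorem batt_le (hb : b ≤ B) : ∀ i, batt B b cst i ≤ B
  | 0 => hb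
  | _ + 1 => min_le_right _ _

theorem Trav.batt_nonneg (hB : 0 ≤ B) (hb : 0 ≤ b) (hT : Trav B b cst k) :
    ∀ i ≤ k, 0 ≤ batt B b cst i
  | 0, _ => hb
  | i + 1, hi => by
    have := hT i (by omega)
    have := hT.batt_nonneg hB hb i (by omega)
    rw [batt_succ]
    exact le_min (by linarith) hB

theorem Trav.le_batt_add_batt_reverse (hrev : IsReverse cst rcst k) (hB : 0 ≤ B)
    (hb : 0 ≤ b) (hT : Trav B b cst k) :
    ∀ j ≤ k, B ≤ batt B b cst (k - j) + batt B B rcst j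
  | 0, _ => by
    have := hT.batt_nonneg hB hb k le_rfl
    simp only [Nat.sub_zero, batt]
    linarith
  | j + 1, hj => by
    have ih := hT.le_batt_add_batt_reverse hrev hB hb j (by omega)
    have hi : k - j = k - (j + 1) + 1 := by omega
    rw [hi, batt_succ] at ih
    have := hT (k - (j + 1)) (by omega)
    have := hT.batt_nonneg hB hb (k - (j + 1)) (by omega)
    have := min_le_left (batt B b cst (k - (j + 1)) - cst (k - (j + 1))) B
    rw [batt_succ, hrev j (by omega), show k - 1 - j = k - (j + 1) by omega]
    rcases min_choice (batt B B rcst j - cst (k - (j + 1))) B with h | h <;> rw [h] <;> linarith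

theorem Trav.reverse (hrev : IsReverse cst rcst k) (hB : 0 ≤ B) (hb : 0 ≤ b) (hbB : b ≤ B)
    (hT : Trav B b cst k) : Trav B B rcst k := by
  intro j hj
  have h := hT.le_batt_add_batt_reverse hrev hB hb (j + 1) (by omega)
  have := batt_le (cst := cst) hbB (k - (j + 1))
  have := min_le_left (batt B B rcst j - rcst j) B
  rw [batt_succ] at h
  linarith

theorem Trav.sub_batt_reverse_le (hrev : IsReverse cst rcst k) (hB : 0 ≤ B) (hb : 0 ≤ b)
    (hT : Trav B b cst k) : B - batt B B rcst k ≤ b := by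
  have := hT.le_batt_add_batt_reverse hrev hB hb k le_rfl
  rw [Nat.sub_self] at this
  exact sub_le_iff_le_add.mpr this

theorem Trav.sub_batt_reverse_le_batt (hrev : IsReverse cst rcst k) (hB : 0 ≤ B)
    (hT : Trav B B rcst k) (hb : B - batt B B rcst k ≤ b) :
    ∀ i ≤ k, B - batt B B rcst (k - i) ≤ batt B b cst i
  | 0, _ => hb
  | i + 1, hi => by
    have ih := hT.sub_batt_reverse_le_batt hrev hB hb i (by omega)
    have hj : k - i = k - (i + 1) + 1 := by omega
    rw [hj, batt_succ, hrev _ (by omega), show k - 1 - (k - (i + 1)) = i by omega] at ih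
    have := hT.batt_nonneg hB hB (k - (i + 1)) (by omega)
    have := min_le_left (batt B B rcst (k - (i + 1)) - cst i) B
    rw [batt_succ]
    exact le_min (by linarith) (by linarith)

theorem Trav.of_reverse (hrev : IsReverse cst rcst k) (hB : 0 ≤ B) (hT : Trav B B rcst k)
    (hb : B - batt B B rcst k ≤ b) : Trav B b cst k := by
  intro i hi
  have h := hT.sub_batt_reverse_le_batt hrev hB hb i hi.le
  have hj : k - i = k - (i + 1) + 1 := by omega
  rw [hj, batt_succ, hrev _ (by omega), show k - 1 - (k - (i + 1)) = i by omega] at h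
  have := batt_le (B := B) (cst := rcst) le_rfl (k - (i + 1))
  have := min_le_left (batt B B rcst (k - (i + 1)) - cst i) B
  linarith

theorem sInf_charges_eq_dE_reverse (hrev : IsReverse cst rcst k) (hB : 0 ≤ B) :
    sInf { y : EReal | ∃ b : ℝ, 0 ≤ b ∧ b ≤ B ∧ Trav B b cst k ∧ y = ((b : ℝ) : EReal) } =
      dE B B rcst k := by
  unfold dE
  split_ifs with hT
  · have := hT.batt_nonneg hB hB k le_rfl
    have := batt_le (B := B) (cst := rcst) le_rfl k
    refine IsLeast.csInf_eq ⟨⟨B - batt B B rcst k, by linarith, by linarith,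
      hT.of_reverse (b := B - batt B B rcst k) hrev hB le_rfl, rfl⟩, ?_⟩
    rintro _ ⟨b, hb, -, hTb, rfl⟩
    exact EReal.coe_le_coe (hTb.sub_batt_reverse_le hrev hB hb)
  · rw [sInf_eq_top]
    rintro _ ⟨b, hb, hbB, hTb, rfl⟩
    exact absurd (hTb.reverse hrev hB hb hbB) hT

end Battery

theorem beta_eq_delta_reversed_general {V : Type*} (Arc : V → V → Prop)
    (c : V → V → ℝ) (B : ℝ) (hB : 0 < B) (s t : V) :
    sInf { x : EReal | ∃ (u : ℕ → V) (k : ℕ), IsPath Arc u k ∧ u 0 = s ∧ u k = t ∧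
        x = sInf { y : EReal | ∃ b : ℝ, 0 ≤ b ∧ b ≤ B ∧
          Trav B b (fun i => c (u i) (u (i + 1))) k ∧ y = ((b : ℝ) : EReal) } } =
      deltaE (fun x y => Arc y x) (fun x y => c y x) B B t s := by
  unfold deltaE
  congr 1
  ext x
  constructor
  · rintro ⟨u, k, hu, rfl, rfl, rfl⟩
    exact ⟨fun j => u (k - j), k, hu.reverse, by simp, by simp,
      sInf_charges_eq_dE_reverse (isReverse_costs_reverse c u k) hB.le⟩
  · rintro ⟨v, k, hv, rfl, rfl, rfl⟩
    exact ⟨fun j => v (k - j), k, hv.reverse, by simp, by simp,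
      (sInf_charges_eq_dE_reverse (isReverse_costs_reverse (fun x y => c y x) v k).symm hB.le).symm⟩

/-- Corollary 2: the minimum initial charge `β_B(s,t)` required at `s`
for getting to `t` (the minimum over `s`–`t` paths `P` of the minimum initial charge
`b_B(P)`) equals the energetic cost `δ_B^{←G}(t,s)` of traveling from `t` to `s` in
the reversed graph. -/
theorem beta_eq_delta_reversed {V : Type*} [Fintype V] (Arc : V → V → Prop)
    (c : V → V → ℝ) (B : ℝ) (hB : 0 < B) (s t : V) :
    sInf { x : EReal | ∃ (u : ℕ → V) (k : ℕ), IsPath Arc u k ∧ u 0 = s ∧ u k = t ∧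
        x = sInf { y : EReal | ∃ b : ℝ, 0 ≤ b ∧ b ≤ B ∧
          Trav B b (fun i => c (u i) (u (i + 1))) k ∧ y = ((b : ℝ) : EReal) } } =
      deltaE (fun x y => Arc y x) (fun x y => c y x) B B t s :=
  beta_eq_delta_reversed_general Arc c B hB s t
end

section
/- Reduction of arbitrary initial charge to a full battery: let G = (V, A, c) be a finite weighted directed graph, B > 0, 0 ≤ b ≤ B, and s ∈ V. Let G' be the graph obtained from G by adding a new vertex s' ∉ V and a single arc s's of cost B − b. Then for every t ∈ V, δ_{B,b}^G(s, t) = δ_B^{G'}(s', t) − (B − b), with the convention ∞ − x = ∞. -/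
open scoped Classical

lemma dE_shift (B b : ℝ) (hb0 : 0 ≤ b) (hbB : b ≤ B) (cst cst' : ℕ → ℝ) (k : ℕ)
    (h0 : cst' 0 = B - b) (hs : ∀ i, i < k → cst' (i + 1) = cst i) :
    dE B B cst' (k + 1) = dE B b cst k + ((B - b : ℝ) : EReal) := by
  have hbatt : ∀ i, i ≤ k → batt B B cst' (i + 1) = batt B b cst i := by
    intro i
    induction i with
    | zero =>
      intro _
      show min (batt B B cst' 0 - cst' 0) B = b
      rw [h0]
      show min (B - (B - b)) B = b
      rw [sub_sub_cancel]
      exact min_eq_left hbB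
    | succ j ih =>
      intro hj
      show min (batt B B cst' (j + 1) - cst' (j + 1)) B = _
      rw [ih (by omega), hs j (by omega)]
      rfl
  have htrav : Trav B B cst' (k + 1) ↔ Trav B b cst k := by
    constructor
    · intro h i hi
      have := h (i + 1) (by omega)
      rwa [hs i hi, hbatt i (le_of_lt hi)] at this
    · intro h i hi
      match i with
      | 0 =>
        show cst' 0 ≤ batt B B cst' 0
        rw [h0]; show B - b ≤ B; linarith
      | j + 1 =>
        rw [hs j (by omega), hbatt j (by omega)]
        exact h j (by omega)
  unfold dE
  by_cases ht : Trav B b cst k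
  · rw [if_pos (htrav.mpr ht), if_pos ht, hbatt k le_rfl, ← EReal.coe_add]
    congr 1
    ring
  · rw [if_neg (fun h => ht (htrav.mp h)), if_neg ht]
    exact (EReal.top_add_coe _).symm

/-- reduction of arbitrary initial charge to a full battery: adding a
new vertex `s'` with a single arc `s's` of cost `B − b` gives, for every `t`,
`δ_{B,b}^G(s,t) = δ_B^{G'}(s',t) − (B − b)` (with `∞ − x = ∞`). Here `G'` is modeled
on `Option V` with `s' = none`. -/
theorem delta_initial_charge_reduction {V : Type*} [Fintype V] (Arc : V → V → Prop)
    (c : V → V → ℝ) (B b : ℝ) (hB : 0 < B) (hb0 : 0 ≤ b) (hbB : b ≤ B) (s : V) :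
    ∀ t : V,
      deltaE Arc c B b s t =
        deltaE (fun x y => (∃ u v, x = some u ∧ y = some v ∧ Arc u v) ∨
            (x = none ∧ y = some s))
          (fun x y => match x, y with
            | some u, some v => c u v
            | _, _ => B - b)
          B B none (some t) - ((B - b : ℝ) : EReal) := by
  intro t
  set Arc' : Option V → Option V → Prop := fun x y =>
    (∃ u v, x = some u ∧ y = some v ∧ Arc u v) ∨ (x = none ∧ y = some s) with hArc'
  set c' : Option V → Option V → ℝ := fun x y => match x, y with
    | some u, some v => c u v
    | _, _ => B - b with hc'
  set r : EReal := ((B - b : ℝ) : EReal) with hr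
  set S : Set EReal := { x : EReal | ∃ (u : ℕ → V) (k : ℕ), IsPath Arc u k ∧ u 0 = s ∧
    u k = t ∧ x = dE B b (fun i => c (u i) (u (i + 1))) k } with hS
  set S' : Set EReal := { x : EReal | ∃ (u : ℕ → Option V) (k : ℕ), IsPath Arc' u k ∧
    u 0 = none ∧ u k = some t ∧ x = dE B B (fun i => c' (u i) (u (i + 1))) k } with hS'
  have key : sInf S' = sInf S + r := by
    apply le_antisymm
    · -- via: sInf S' - r ≤ sInf S
      rw [← EReal.sub_le_iff_le_add (by left; exact EReal.coe_ne_bot _)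
        (by left; exact EReal.coe_ne_top _)]
      apply le_sInf
      rintro x ⟨u, k, hp, h0, hk, hx⟩
      rw [EReal.sub_le_iff_le_add (by left; exact EReal.coe_ne_bot _)
        (by left; exact EReal.coe_ne_top _)]
      -- build the lifted path
      set u' : ℕ → Option V := fun i => Nat.casesOn i none (fun j => some (u j)) with hu'
      have hmem : x + r ∈ S' := by
        refine ⟨u', k + 1, ?_, rfl, ?_, ?_⟩
        · intro i hi
          match i with
          | 0 => exact Or.inr ⟨rfl, by show some (u 0) = some s; rw [h0]⟩
          | j + 1 => exact Or.inl ⟨u j, u (j + 1), rfl, rfl, hp j (by omega)⟩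
        · show some (u k) = some t; rw [hk]
        · rw [hx, hr]
          exact (dE_shift B b hb0 hbB (fun i => c (u i) (u (i + 1)))
            (fun i => c' (u' i) (u' (i + 1))) k rfl (fun i _ => rfl)).symm
      exact sInf_le hmem
    · apply le_sInf
      rintro y ⟨u', k', hp, h0, hk, hy⟩
      -- k' ≥ 1
      obtain ⟨k, rfl⟩ : ∃ k, k' = k + 1 := by
        cases k' with
        | zero => rw [h0] at hk; exact absurd hk (by simp)
        | succ k => exact ⟨k, rfl⟩
      have hsome : ∀ i, i ≤ k → ∃ v, u' (i + 1) = some v := by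
        intro i
        induction i with
        | zero =>
          intro _
          rcases hp 0 (by omega) with ⟨a, v, ha, hv, _⟩ | ⟨_, hv⟩
          · rw [h0] at ha; exact absurd ha (by simp)
          · exact ⟨s, hv⟩
        | succ j ih =>
          intro hj
          rcases hp (j + 1) (by omega) with ⟨a, v, _, hv, _⟩ | ⟨ha, _⟩
          · exact ⟨v, hv⟩
          · obtain ⟨v, hv⟩ := ih (by omega); rw [ha] at hv; exact absurd hv (by simp)
      set u : ℕ → V := fun i => (u' (i + 1)).getD s with hu
      have husome : ∀ i, i ≤ k → u' (i + 1) = some (u i) := by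
        intro i hi
        obtain ⟨v, hv⟩ := hsome i hi
        rw [hu]; simp [hv]
      have hu0 : u 0 = s := by
        rcases hp 0 (by omega) with ⟨a, v, ha, hv, _⟩ | ⟨_, hv⟩
        · rw [h0] at ha; exact absurd ha (by simp)
        · have := husome 0 (by omega); rw [hv] at this
          exact (Option.some_injective V this.symm)
      have huk : u k = t := by
        have := husome k le_rfl; rw [hk] at this
        exact (Option.some_injective V this.symm)
      have hup : IsPath Arc u k := by
        intro i hi
        rcases hp (i + 1) (by omega) with ⟨a, v, ha, hv, harc⟩ | ⟨ha, _⟩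
        · have h1 := husome i (by omega); have h2 := husome (i + 1) hi
          rw [ha] at h1; rw [hv] at h2
          rw [Option.some_injective V h1, Option.some_injective V h2] at harc
          exact harc
        · have := husome i (by omega); rw [ha] at this; exact absurd this (by simp)
      have hxS : dE B b (fun i => c (u i) (u (i + 1))) k ∈ S :=
        ⟨u, k, hup, hu0, huk, rfl⟩
      have hyeq : y = dE B b (fun i => c (u i) (u (i + 1))) k + r := by
        rw [hy, hr]
        apply dE_shift B b hb0 hbB _ _ k
        · show c' (u' 0) (u' 1) = B - b
          rw [h0]
        · intro i hi
          show c' (u' (i + 1)) (u' (i + 2)) = c (u i) (u (i + 1))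
          rw [husome i (by omega), husome (i + 1) (by omega)]
      rw [hyeq]
      exact add_le_add_left (sInf_le hxS) r
  show sInf S = sInf S' - r
  rw [key, hr, EReal.add_sub_cancel_right]
end
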